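/- arXiv:2603.00338 — 6 statements merged into one kernel-verified Lean document; each statement's English description precedes it below -/
import Mathlib

section
/- Let T > 0 and let α, β, λ, ε, μ > 0 be constants satisfying λ ≥ α + εμ/(4β). Let χ : [0,T] → ℝ³ be a differentiable trajectory, χ̇ₛ : [0,T] → ℝ³ a commanded safe velocity, h : ℝ³ × ℝ → ℝ a differentiable function, and V : [0,T] → ℝ a differentiable function such that for all t ∈ [0,T]: (i) V(t) ≥ β‖χ'(t) − χ̇ₛ(t)‖², (ii) V'(t) ≤ −λ V(t), and (iii) the input-to-state safe condition ⟨∇_χ h(χ(t),t), χ̇ₛ(t)⟩ + ∂ₜh(χ(t),t) ≥ −α h(χ(t),t) + (1/ε)‖∇_χ h(χ(t),t)‖² holds. Define B(t) = h(χ(t),t) − (1/μ) V(t). If B(0) ≥ 0, then B(t) ≥ 0 for all t ∈ [0,T]. -/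
/-! Along the trajectory the candidate `B = h - V/μ` satisfies `B' ≥ -α B`, so by Grönwall's
inequality it cannot leave `[0, ∞)`. -/

open scoped RealInnerProductSpace

open Set

/-- Grönwall's inequality for `-f` with rate `-α` bounds `-f t` by `-f a · e^{-α (t - a)} ≤ 0`. -/
theorem nonneg_of_neg_mul_le_deriv_right {f f' : ℝ → ℝ} {a b α : ℝ}
    (hf : ContinuousOn f (Icc a b))
    (hf' : ∀ t ∈ Ico a b, HasDerivWithinAt f (f' t) (Ici t) t)
    (bound : ∀ t ∈ Ico a b, -α * f t ≤ f' t) (ha : 0 ≤ f a) :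
    ∀ t ∈ Icc a b, 0 ≤ f t := by
  intro t ht
  have hgronwall : -f t ≤ gronwallBound (-f a) (-α) 0 (t - a) :=
    le_gronwallBound_of_liminf_deriv_right_le hf.neg
      (fun s hs _ hr => (hf' s hs).neg.liminf_right_slope_le hr) le_rfl
      (fun s hs => by rw [Pi.neg_apply]; linarith [bound s hs]) t ht
  have hbound_nonpos : gronwallBound (-f a) (-α) 0 (t - a) ≤ 0 := by
    rw [gronwallBound_ε0]
    exact mul_nonpos_of_nonpos_of_nonneg (neg_nonpos.mpr ha) (Real.exp_pos _).le
  linarith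

section InnerProductSpace

variable {E : Type*} [NormedAddCommGroup E] [InnerProductSpace ℝ E]

theorem neg_one_div_mul_norm_sq_sub_le_inner {ε : ℝ} (hε : 0 < ε) (u w : E) :
    -(1 / ε * ‖u‖ ^ 2) - ε / 4 * ‖w‖ ^ 2 ≤ ⟪u, w⟫ := by
  have hyoung : ‖u‖ * ‖w‖ ≤ 1 / ε * ‖u‖ ^ 2 + ε / 4 * ‖w‖ ^ 2 := by
    have hsq : 1 / ε * ‖u‖ ^ 2 + ε / 4 * ‖w‖ ^ 2 - ‖u‖ * ‖w‖ = 1 / ε * (‖u‖ - ε * ‖w‖ / 2) ^ 2 := by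
      field_simp
      ring
    linarith [hsq, show 0 ≤ 1 / ε * (‖u‖ - ε * ‖w‖ / 2) ^ 2 by positivity]
  linarith [neg_le_of_abs_le (abs_real_inner_le_norm u w)]

/-- The ISSf margin `‖∇h‖²/ε` absorbs the tracking error `v - vs` at the cost `ε‖v - vs‖²/4`,
which the decay of `V` pays for as soon as `λ ≥ α + εμ/(4β)`. -/
theorem neg_mul_barrier_le_barrier_deriv {α β lam ε μ : ℝ} (hβ : 0 < β) (hε : 0 < ε)
    (hμ : 0 < μ) (hparam : lam ≥ α + ε * μ / (4 * β)) {g v vs : E} {η ηₜ V V' : ℝ}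
    (hVlb : V ≥ β * ‖v - vs‖ ^ 2) (hVdecay : V' ≤ -lam * V)
    (hISSf : ⟪g, vs⟫ + ηₜ ≥ -α * η + 1 / ε * ‖g‖ ^ 2) :
    -α * (η - 1 / μ * V) ≤ ⟪g, v⟫ + ηₜ - 1 / μ * V' := by
  have hV : 0 ≤ V := le_trans (by positivity) hVlb
  have htracking : ⟪g, v⟫ = ⟪g, vs⟫ + ⟪g, v - vs⟫ := by
    rw [← inner_add_right, add_sub_cancel]
  have hyoung := neg_one_div_mul_norm_sq_sub_le_inner hε g (v - vs)
  have herror : ε / 4 * ‖v - vs‖ ^ 2 ≤ ε / (4 * β) * V := by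
    calc ε / 4 * ‖v - vs‖ ^ 2 = ε / (4 * β) * (β * ‖v - vs‖ ^ 2) := by field_simp
      _ ≤ ε / (4 * β) * V := by gcongr
  have hdecay : (α / μ + ε / (4 * β)) * V ≤ -(1 / μ * V') := by
    calc (α / μ + ε / (4 * β)) * V = (α + ε * μ / (4 * β)) / μ * V := by field_simp
      _ ≤ lam / μ * V := by gcongr
      _ ≤ -(1 / μ * V') := by
        have := mul_le_mul_of_nonneg_left hVdecay (one_div_nonneg.mpr hμ.le)
        linarith [show 1 / μ * (-lam * V) = -(lam / μ * V) by ring]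
  have hscale : -α * (η - 1 / μ * V) = -α * η + α / μ * V := by ring
  linarith

variable [CompleteSpace E]

theorem DifferentiableAt.hasDerivAt_comp_prodMk_self {h : E × ℝ → ℝ} {χ : ℝ → E} {v : E} {t : ℝ}
    (hh : DifferentiableAt ℝ h (χ t, t)) (hχ : HasDerivAt χ v t) :
    HasDerivAt (fun s => h (χ s, s))
      (⟪gradient (fun x => h (x, t)) (χ t), v⟫ + deriv (fun s => h (χ t, s)) t) t := by
  set L := fderiv ℝ h (χ t, t)
  have hL : HasFDerivAt h L (χ t, t) := hh.hasFDerivAt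
  have hspace : HasFDerivAt (fun x => h (x, t)) (L.comp (ContinuousLinearMap.inl ℝ E ℝ)) (χ t) :=
    hL.comp (χ t) (hasFDerivAt_prodMk_left (χ t) t)
  have htime : HasDerivAt (fun s => h (χ t, s)) (L (0, 1)) t :=
    hL.comp_hasDerivAt t ((hasDerivAt_const t (χ t)).prodMk (hasDerivAt_id t))
  have hsplit : L (v, 1) = ⟪gradient (fun x => h (x, t)) (χ t), v⟫ + L (0, 1) := by
    rw [gradient, hspace.fderiv, InnerProductSpace.toDual_symm_apply,
      ContinuousLinearMap.comp_apply, ContinuousLinearMap.inl_apply, ← map_add, Prod.mk_add_mk,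
      add_zero, zero_add]
  rw [htime.deriv, ← hsplit]
  exact hL.comp_hasDerivAt (f := fun s => (χ s, s)) t (hχ.prodMk (hasDerivAt_id t))

end InnerProductSpace

theorem full_order_system_safety_general
    (T α β lam ε μ : ℝ)
    (hβ : 0 < β) (hε : 0 < ε) (hμ : 0 < μ)
    (hparam : lam ≥ α + ε * μ / (4 * β))
    (χ χs : ℝ → EuclideanSpace ℝ (Fin 3))
    (h : EuclideanSpace ℝ (Fin 3) × ℝ → ℝ)
    (V : ℝ → ℝ)
    (hχ : ∀ t ∈ Set.Icc (0 : ℝ) T, DifferentiableAt ℝ χ t)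
    (hh : Differentiable ℝ h)
    (hV : ∀ t ∈ Set.Icc (0 : ℝ) T, DifferentiableAt ℝ V t)
    (hVlb : ∀ t ∈ Set.Icc (0 : ℝ) T, V t ≥ β * ‖deriv χ t - χs t‖ ^ 2)
    (hVdecay : ∀ t ∈ Set.Icc (0 : ℝ) T, deriv V t ≤ -lam * V t)
    (hISSf : ∀ t ∈ Set.Icc (0 : ℝ) T,
      ⟪gradient (fun x => h (x, t)) (χ t), χs t⟫ + deriv (fun s => h (χ t, s)) t
        ≥ -α * h (χ t, t) + (1 / ε) * ‖gradient (fun x => h (x, t)) (χ t)‖ ^ 2)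
    (hB0 : h (χ 0, 0) - (1 / μ) * V 0 ≥ 0) :
    ∀ t ∈ Set.Icc (0 : ℝ) T, h (χ t, t) - (1 / μ) * V t ≥ 0 := by
  have hB : ∀ t ∈ Icc (0 : ℝ) T, HasDerivAt (fun s => h (χ s, s) - 1 / μ * V s)
      (⟪gradient (fun x => h (x, t)) (χ t), deriv χ t⟫ + deriv (fun s => h (χ t, s)) t
        - 1 / μ * deriv V t) t := fun t ht =>
    ((hh _).hasDerivAt_comp_prodMk_self (hχ t ht).hasDerivAt).sub
      ((hV t ht).hasDerivAt.const_mul _)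
  exact nonneg_of_neg_mul_le_deriv_right
    (fun t ht => (hB t ht).continuousAt.continuousWithinAt)
    (fun t ht => (hB t (Ico_subset_Icc_self ht)).hasDerivWithinAt)
    (fun t ht => have ht' := Ico_subset_Icc_self ht
      neg_mul_barrier_le_barrier_deriv hβ hε hμ hparam (hVlb t ht') (hVdecay t ht') (hISSf t ht'))
    hB0

/-- Trajectory-level content of Theorem 1 (Full-Order System Safety):
under the tracking CLF bounds and the ISSf-CBF condition on the safe velocity
command, with parameters satisfying `λ ≥ α + εμ/(4β)`, the barrier candidate
`B(t) = h(χ(t),t) − V(t)/μ` remains nonnegative on `[0,T]` if it starts nonnegative. -/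
theorem full_order_system_safety
    (T α β lam ε μ : ℝ)
    (hT : 0 < T) (hα : 0 < α) (hβ : 0 < β) (hlam : 0 < lam) (hε : 0 < ε) (hμ : 0 < μ)
    (hparam : lam ≥ α + ε * μ / (4 * β))
    (χ χs : ℝ → EuclideanSpace ℝ (Fin 3))
    (h : EuclideanSpace ℝ (Fin 3) × ℝ → ℝ)
    (V : ℝ → ℝ)
    (hχ : ∀ t ∈ Set.Icc (0 : ℝ) T, DifferentiableAt ℝ χ t)
    (hh : Differentiable ℝ h)
    (hV : ∀ t ∈ Set.Icc (0 : ℝ) T, DifferentiableAt ℝ V t)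
    (hVlb : ∀ t ∈ Set.Icc (0 : ℝ) T, V t ≥ β * ‖deriv χ t - χs t‖ ^ 2)
    (hVdecay : ∀ t ∈ Set.Icc (0 : ℝ) T, deriv V t ≤ -lam * V t)
    (hISSf : ∀ t ∈ Set.Icc (0 : ℝ) T,
      ⟪gradient (fun x => h (x, t)) (χ t), χs t⟫ + deriv (fun s => h (χ t, s)) t
        ≥ -α * h (χ t, t) + (1 / ε) * ‖gradient (fun x => h (x, t)) (χ t)‖ ^ 2)
    (hB0 : h (χ 0, 0) - (1 / μ) * V 0 ≥ 0) :
    ∀ t ∈ Set.Icc (0 : ℝ) T, h (χ t, t) - (1 / μ) * V t ≥ 0 :=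
  full_order_system_safety_general T α β lam ε μ hβ hε hμ hparam χ χs h V hχ hh hV hVlb hVdecay
    hISSf hB0
end

section
/- Let T > 0 and let α, β, λ, ε, μ > 0 satisfy λ ≥ α + εμ/(4β). Let χ : [0,T] → ℝ³ be differentiable, χ̇ₛ : [0,T] → ℝ³, h : ℝ³ × ℝ → ℝ differentiable, and V : [0,T] → ℝ differentiable with V(t) ≥ β‖χ'(t) − χ̇ₛ(t)‖², V'(t) ≤ −λ V(t), and ⟨∇_χ h(χ(t),t), χ̇ₛ(t)⟩ + ∂ₜh(χ(t),t) ≥ −α h(χ(t),t) + (1/ε)‖∇_χ h(χ(t),t)‖² for all t ∈ [0,T]. If h(χ(0),0) − (1/μ)V(0) ≥ 0, then h(χ(t),t) ≥ 0 for all t ∈ [0,T]. -/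
/-!
Along the trajectory, `B = h - V / μ` satisfies `B' ≥ -α B`. The velocity mismatch term
`⟪∇h, χ' - χₛ⟫` is absorbed by Young's inequality into the `(1/ε)‖∇h‖²` margin of the
safety condition plus a term `(ε/4)‖χ' - χₛ‖² ≤ ε V / (4β)`, which the decay `V' ≤ -λV` pays for
since `λ - α ≥ εμ/(4β)`. Hence `B t * exp (α t)` is nondecreasing, so `B ≥ 0`, and `h ≥ B` as `V ≥ 0`.
-/

open scoped RealInnerProductSpace

open Set Real

theorem monotoneOn_mul_exp_of_neg_mul_le_deriv {B B' : ℝ → ℝ} {α a b : ℝ}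
    (hB : ∀ t ∈ Icc a b, HasDerivAt B (B' t) t) (hle : ∀ t ∈ Icc a b, -α * B t ≤ B' t) :
    MonotoneOn (fun t => B t * exp (α * t)) (Icc a b) := by
  have hderiv : ∀ t ∈ Icc a b, HasDerivAt (fun t => B t * exp (α * t))
      ((B' t + α * B t) * exp (α * t)) t := by
    intro t ht
    have hexp : HasDerivAt (fun t => exp (α * t)) (exp (α * t) * α) t := by
      simpa using ((hasDerivAt_id t).const_mul α).exp
    exact ((hB t ht).mul hexp).congr_deriv (by ring)
  refine monotoneOn_of_hasDerivWithinAt_nonneg (convex_Icc a b)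
    (fun t ht => (hderiv t ht).continuousAt.continuousWithinAt)
    (fun t ht => (hderiv t (interior_subset ht)).hasDerivWithinAt) fun t ht => ?_
  have := hle t (interior_subset ht)
  exact mul_nonneg (by linarith) (exp_pos _).le

theorem nonneg_of_neg_mul_le_deriv {B B' : ℝ → ℝ} {α a b : ℝ}
    (hB : ∀ t ∈ Icc a b, HasDerivAt B (B' t) t) (hle : ∀ t ∈ Icc a b, -α * B t ≤ B' t)
    (h₀ : 0 ≤ B a) : ∀ t ∈ Icc a b, 0 ≤ B t := by
  intro t ht
  have hmono := monotoneOn_mul_exp_of_neg_mul_le_deriv hB hle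
    (left_mem_Icc.2 (ht.1.trans ht.2)) ht ht.1
  exact nonneg_of_mul_nonneg_left (le_trans (mul_nonneg h₀ (exp_pos _).le) hmono) (exp_pos _)

theorem neg_le_real_inner_add_young {F : Type*} [NormedAddCommGroup F] [InnerProductSpace ℝ F]
    {ε : ℝ} (hε : 0 < ε) (g e : F) :
    -((1 / ε) * ‖g‖ ^ 2 + ε / 4 * ‖e‖ ^ 2) ≤ ⟪g, e⟫ := by
  have hsq := norm_add_sq_real g ((ε / 2) • e)
  rw [real_inner_smul_right, norm_smul, Real.norm_of_nonneg (by positivity)] at hsq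
  have : 0 ≤ ‖g + (ε / 2) • e‖ ^ 2 / ε := by positivity
  rw [hsq] at this
  field_simp at this ⊢
  linarith

theorem DifferentiableAt.hasDerivAt_comp_prodMk {E : Type*} [NormedAddCommGroup E]
    [InnerProductSpace ℝ E] [CompleteSpace E] {h : E × ℝ → ℝ} {γ : ℝ → E} {v : E} {t : ℝ}
    (hh : DifferentiableAt ℝ h (γ t, t)) (hγ : HasDerivAt γ v t) :
    HasDerivAt (fun s => h (γ s, s))
      (⟪gradient (fun x => h (x, t)) (γ t), v⟫ + deriv (fun s => h (γ t, s)) t) t := by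
  set L := fderiv ℝ h (γ t, t)
  have hx : HasFDerivAt (fun x => h (x, t)) (L.comp (.inl ℝ E ℝ)) (γ t) :=
    hh.hasFDerivAt.comp (γ t) (hasFDerivAt_prodMk_left (γ t) t)
  have hs : HasDerivAt (fun s => h (γ t, s)) (L (0, 1)) t :=
    hh.hasFDerivAt.comp_hasDerivAt t ((hasDerivAt_const t (γ t)).prodMk (hasDerivAt_id t))
  have hsplit : L (v, 1) = L (v, 0) + L (0, 1) := by rw [← map_add]; simp
  rw [hs.deriv, gradient, hx.fderiv, InnerProductSpace.toDual_symm_apply,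
    ContinuousLinearMap.comp_apply, ContinuousLinearMap.inl_apply, ← hsplit]
  exact hh.hasFDerivAt.comp_hasDerivAt (f := fun s => (γ s, s)) t (hγ.prodMk (hasDerivAt_id t))

theorem neg_mul_le_barrier_deriv {F : Type*} [NormedAddCommGroup F] [InnerProductSpace ℝ F]
    {α β lam ε μ V V' hx ht : ℝ} {G v w : F} (hβ : 0 < β) (hε : 0 < ε) (hμ : 0 < μ)
    (hparam : lam ≥ α + ε * μ / (4 * β)) (hVlb : V ≥ β * ‖v - w‖ ^ 2) (hVdecay : V' ≤ -lam * V)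
    (hISSf : ⟪G, w⟫ + ht ≥ -α * hx + (1 / ε) * ‖G‖ ^ 2) :
    -α * (hx - 1 / μ * V) ≤ ⟪G, v⟫ + ht - 1 / μ * V' := by
  have hV : 0 ≤ V := (mul_nonneg hβ.le (sq_nonneg _)).trans hVlb
  have hrate : ε / (4 * β) ≤ (lam - α) / μ := by
    rw [le_div_iff₀ hμ, div_mul_eq_mul_div]
    linarith
  have hmismatch : ε / 4 * ‖v - w‖ ^ 2 ≤ (lam - α) / μ * V :=
    calc ε / 4 * ‖v - w‖ ^ 2 = ε / (4 * β) * (β * ‖v - w‖ ^ 2) := by field_simp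
      _ ≤ ε / (4 * β) * V := by gcongr
      _ ≤ (lam - α) / μ * V := by gcongr
  have hdecay : 1 / μ * V' ≤ 1 / μ * (-lam * V) := by gcongr
  have hsplit : ⟪G, v⟫ = ⟪G, w⟫ + ⟪G, v - w⟫ := by rw [← inner_add_right, add_sub_cancel]
  have hyoung := neg_le_real_inner_add_young hε G (v - w)
  have hrate_expand : (lam - α) / μ * V = 1 / μ * (lam * V) - α * (1 / μ * V) := by ring
  linarith

theorem full_order_safety_corollary_general
    (T α β lam ε μ : ℝ)
    (hβ : 0 < β) (hε : 0 < ε) (hμ : 0 < μ)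
    (hparam : lam ≥ α + ε * μ / (4 * β))
    (χ χs : ℝ → EuclideanSpace ℝ (Fin 3))
    (h : EuclideanSpace ℝ (Fin 3) × ℝ → ℝ)
    (V : ℝ → ℝ)
    (hχ : ∀ t ∈ Set.Icc (0 : ℝ) T, DifferentiableAt ℝ χ t)
    (hh : Differentiable ℝ h)
    (hV : ∀ t ∈ Set.Icc (0 : ℝ) T, DifferentiableAt ℝ V t)
    (hVlb : ∀ t ∈ Set.Icc (0 : ℝ) T, V t ≥ β * ‖deriv χ t - χs t‖ ^ 2)
    (hVdecay : ∀ t ∈ Set.Icc (0 : ℝ) T, deriv V t ≤ -lam * V t)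
    (hISSf : ∀ t ∈ Set.Icc (0 : ℝ) T,
      ⟪gradient (fun x => h (x, t)) (χ t), χs t⟫ + deriv (fun s => h (χ t, s)) t
        ≥ -α * h (χ t, t) + (1 / ε) * ‖gradient (fun x => h (x, t)) (χ t)‖ ^ 2)
    (hB0 : h (χ 0, 0) - (1 / μ) * V 0 ≥ 0) :
    ∀ t ∈ Set.Icc (0 : ℝ) T, h (χ t, t) ≥ 0 := by
  have hB : ∀ t ∈ Icc 0 T, HasDerivAt (fun s => h (χ s, s) - 1 / μ * V s)
      (⟪gradient (fun x => h (x, t)) (χ t), deriv χ t⟫ + deriv (fun s => h (χ t, s)) t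
        - 1 / μ * deriv V t) t := fun t ht =>
    ((hh _).hasDerivAt_comp_prodMk (hχ t ht).hasDerivAt).sub
      ((hV t ht).hasDerivAt.const_mul (1 / μ))
  have hB_nonneg := nonneg_of_neg_mul_le_deriv hB (fun t ht => neg_mul_le_barrier_deriv hβ hε hμ
    hparam (hVlb t ht) (hVdecay t ht) (hISSf t ht)) hB0
  intro t ht
  have hV_nonneg : 0 ≤ 1 / μ * V t :=
    mul_nonneg (by positivity) ((mul_nonneg hβ.le (sq_nonneg _)).trans (hVlb t ht))
  linarith [hB_nonneg t ht]

/-- Corollary to Theorem 1: safety (nonnegativity of the safety function value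
`h(χ(t),t)`) of the full-order trajectory over the horizon `[0,T]`. -/
theorem full_order_safety_corollary
    (T α β lam ε μ : ℝ)
    (hT : 0 < T) (hα : 0 < α) (hβ : 0 < β) (hlam : 0 < lam) (hε : 0 < ε) (hμ : 0 < μ)
    (hparam : lam ≥ α + ε * μ / (4 * β))
    (χ χs : ℝ → EuclideanSpace ℝ (Fin 3))
    (h : EuclideanSpace ℝ (Fin 3) × ℝ → ℝ)
    (V : ℝ → ℝ)
    (hχ : ∀ t ∈ Set.Icc (0 : ℝ) T, DifferentiableAt ℝ χ t)
    (hh : Differentiable ℝ h)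
    (hV : ∀ t ∈ Set.Icc (0 : ℝ) T, DifferentiableAt ℝ V t)
    (hVlb : ∀ t ∈ Set.Icc (0 : ℝ) T, V t ≥ β * ‖deriv χ t - χs t‖ ^ 2)
    (hVdecay : ∀ t ∈ Set.Icc (0 : ℝ) T, deriv V t ≤ -lam * V t)
    (hISSf : ∀ t ∈ Set.Icc (0 : ℝ) T,
      ⟪gradient (fun x => h (x, t)) (χ t), χs t⟫ + deriv (fun s => h (χ t, s)) t
        ≥ -α * h (χ t, t) + (1 / ε) * ‖gradient (fun x => h (x, t)) (χ t)‖ ^ 2)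
    (hB0 : h (χ 0, 0) - (1 / μ) * V 0 ≥ 0) :
    ∀ t ∈ Set.Icc (0 : ℝ) T, h (χ t, t) ≥ 0 :=
  full_order_safety_corollary_general T α β lam ε μ hβ hε hμ hparam χ χs h V hχ hh hV hVlb hVdecay
    hISSf hB0
end

section
/- Let T > 0 and let α, β, λ, ε, μ > 0 satisfy λ ≥ α + εμ/(4β). Let χ : [0,T] → ℝ³ be differentiable, χ̇ₛ : [0,T] → ℝ³, h : ℝ³ × ℝ → ℝ differentiable, and V : [0,T] → ℝ differentiable with V(t) ≥ β‖χ'(t) − χ̇ₛ(t)‖², V'(t) ≤ −λ V(t), and ⟨∇_χ h(χ(t),t), χ̇ₛ(t)⟩ + ∂ₜh(χ(t),t) ≥ −α h(χ(t),t) + (1/ε)‖∇_χ h(χ(t),t)‖² for all t ∈ [0,T]. Then the function B(t) = h(χ(t),t) − (1/μ)V(t) satisfies the differential inequality B'(t) ≥ −α B(t) for all t ∈ [0,T]. -/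
open scoped RealInnerProductSpace

/-!
Along the trajectory, `B' = ⟪∇ₓh, χ'⟫ + ∂ₜh − V'/μ`. Splitting `χ' = χ̇ₛ + (χ' − χ̇ₛ)`, the `χ̇ₛ`
part is controlled by the input-to-state safety condition on `h`, which leaves a surplus `‖∇ₓh‖²/ε`.
Young's inequality spends this surplus on the cross term `⟪∇ₓh, χ' − χ̇ₛ⟫` at the price
`(ε/4)‖χ' − χ̇ₛ‖² ≤ εV/(4β)`, and the decay `V' ≤ −λV` with `λ ≥ α + εμ/(4β)` pays that price while
still leaving `αV/μ`.
-/

section TimeVaryingFunction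

variable {E : Type*} [NormedAddCommGroup E] [InnerProductSpace ℝ E]
  {h : E × ℝ → ℝ} {x : E} {t : ℝ}

theorem inner_gradient_slice_eq_fderiv [CompleteSpace E] (hd : DifferentiableAt ℝ h (x, t))
    (w : E) : ⟪gradient (fun y => h (y, t)) x, w⟫ = fderiv ℝ h (x, t) (w, 0) := by
  have hslice : HasFDerivAt (fun y => h (y, t)) _ x :=
    hd.hasFDerivAt.comp x (hasFDerivAt_prodMk_left x t)
  rw [inner_gradient_left, hslice.fderiv]
  rfl

theorem deriv_slice_eq_fderiv (hd : DifferentiableAt ℝ h (x, t)) :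
    deriv (fun s => h (x, s)) t = fderiv ℝ h (x, t) (0, 1) :=
  (hd.hasFDerivAt.comp_hasDerivAt t ((hasDerivAt_const t x).prodMk (hasDerivAt_id t))).deriv

theorem hasDerivAt_comp_curve_prodMk [CompleteSpace E] {γ : ℝ → E}
    (hd : DifferentiableAt ℝ h (γ t, t)) (hγ : DifferentiableAt ℝ γ t) :
    HasDerivAt (fun s => h (γ s, s))
      (⟪gradient (fun y => h (y, t)) (γ t), deriv γ t⟫ + deriv (fun s => h (γ t, s)) t) t := by
  rw [inner_gradient_slice_eq_fderiv hd, deriv_slice_eq_fderiv hd, ← map_add, Prod.mk_add_mk,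
    add_zero, zero_add]
  exact hd.hasFDerivAt.comp_hasDerivAt (f := fun s => (γ s, s)) t
    (hγ.hasDerivAt.prodMk (hasDerivAt_id t))

end TimeVaryingFunction

theorem neg_young_le_real_inner {F : Type*} [NormedAddCommGroup F] [InnerProductSpace ℝ F]
    {ε : ℝ} (hε : 0 < ε) (g w : F) :
    -(1 / ε * ‖g‖ ^ 2 + ε / 4 * ‖w‖ ^ 2) ≤ ⟪g, w⟫ := by
  have hsq : ⟪g, w⟫ + (1 / ε * ‖g‖ ^ 2 + ε / 4 * ‖w‖ ^ 2) = ε / 4 * ‖(2 / ε) • g + w‖ ^ 2 := by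
    rw [norm_add_sq_real, norm_smul, real_inner_smul_left, Real.norm_of_nonneg (by positivity)]
    field_simp
    ring
  rw [neg_le_iff_add_nonneg, hsq]
  positivity

theorem young_remainder_add_le_of_decay {α β lam ε μ v dv n : ℝ} (hβ : 0 < β) (hε : 0 < ε)
    (hμ : 0 < μ) (hparam : lam ≥ α + ε * μ / (4 * β)) (hv : v ≥ β * n) (hn : 0 ≤ n)
    (hdv : dv ≤ -lam * v) :
    ε / 4 * n + α / μ * v ≤ -(1 / μ) * dv := by
  have hv0 : 0 ≤ v := le_trans (by positivity) hv
  calc ε / 4 * n + α / μ * v = ε / (4 * β) * (β * n) + α / μ * v := by field_simp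
    _ ≤ ε / (4 * β) * v + α / μ * v := by gcongr
    _ = (α + ε * μ / (4 * β)) / μ * v := by field_simp; ring
    _ ≤ lam / μ * v := by gcongr
    _ ≤ -(1 / μ) * dv := by
        rw [neg_mul, ← mul_neg, one_div_mul_eq_div, div_mul_eq_mul_div]
        gcongr
        linarith

theorem barrier_differential_inequality_general
    (T α β lam ε μ : ℝ)
    (hβ : 0 < β) (hε : 0 < ε) (hμ : 0 < μ)
    (hparam : lam ≥ α + ε * μ / (4 * β))
    (χ χs : ℝ → EuclideanSpace ℝ (Fin 3))
    (h : EuclideanSpace ℝ (Fin 3) × ℝ → ℝ)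
    (V : ℝ → ℝ)
    (hχ : ∀ t ∈ Set.Icc (0 : ℝ) T, DifferentiableAt ℝ χ t)
    (hh : Differentiable ℝ h)
    (hV : ∀ t ∈ Set.Icc (0 : ℝ) T, DifferentiableAt ℝ V t)
    (hVlb : ∀ t ∈ Set.Icc (0 : ℝ) T, V t ≥ β * ‖deriv χ t - χs t‖ ^ 2)
    (hVdecay : ∀ t ∈ Set.Icc (0 : ℝ) T, deriv V t ≤ -lam * V t)
    (hISSf : ∀ t ∈ Set.Icc (0 : ℝ) T,
      ⟪gradient (fun x => h (x, t)) (χ t), χs t⟫ + deriv (fun s => h (χ t, s)) t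
        ≥ -α * h (χ t, t) + (1 / ε) * ‖gradient (fun x => h (x, t)) (χ t)‖ ^ 2)
:
    ∀ t ∈ Set.Icc (0 : ℝ) T,
      deriv (fun s => h (χ s, s) - (1 / μ) * V s) t
        ≥ -α * (h (χ t, t) - (1 / μ) * V t) := by
  intro t ht
  have hB : HasDerivAt (fun s => h (χ s, s) - (1 / μ) * V s) _ t :=
    (hasDerivAt_comp_curve_prodMk (hh _) (hχ t ht)).sub ((hV t ht).hasDerivAt.const_mul (1 / μ))
  set g := gradient (fun x => h (x, t)) (χ t)
  have hsplit : ⟪g, deriv χ t⟫ = ⟪g, deriv χ t - χs t⟫ + ⟪g, χs t⟫ := by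
    rw [← inner_add_right, sub_add_cancel]
  have hcross := neg_young_le_real_inner hε g (deriv χ t - χs t)
  have hdecay := young_remainder_add_le_of_decay hβ hε hμ hparam (hVlb t ht) (sq_nonneg _)
    (hVdecay t ht)
  rw [hB.deriv, hsplit]
  linear_combination hISSf t ht + hcross + hdecay

/-- Chain of inequalities in the proof of Theorem 1: the barrier candidate
`B(t) = h(χ(t),t) − V(t)/μ` satisfies the differential inequality `B'(t) ≥ −α B(t)`
on `[0,T]`. -/
theorem barrier_differential_inequality
    (T α β lam ε μ : ℝ)
    (hT : 0 < T) (hα : 0 < α) (hβ : 0 < β) (hlam : 0 < lam) (hε : 0 < ε) (hμ : 0 < μ)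
    (hparam : lam ≥ α + ε * μ / (4 * β))
    (χ χs : ℝ → EuclideanSpace ℝ (Fin 3))
    (h : EuclideanSpace ℝ (Fin 3) × ℝ → ℝ)
    (V : ℝ → ℝ)
    (hχ : ∀ t ∈ Set.Icc (0 : ℝ) T, DifferentiableAt ℝ χ t)
    (hh : Differentiable ℝ h)
    (hV : ∀ t ∈ Set.Icc (0 : ℝ) T, DifferentiableAt ℝ V t)
    (hVlb : ∀ t ∈ Set.Icc (0 : ℝ) T, V t ≥ β * ‖deriv χ t - χs t‖ ^ 2)
    (hVdecay : ∀ t ∈ Set.Icc (0 : ℝ) T, deriv V t ≤ -lam * V t)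
    (hISSf : ∀ t ∈ Set.Icc (0 : ℝ) T,
      ⟪gradient (fun x => h (x, t)) (χ t), χs t⟫ + deriv (fun s => h (χ t, s)) t
        ≥ -α * h (χ t, t) + (1 / ε) * ‖gradient (fun x => h (x, t)) (χ t)‖ ^ 2)
:
    ∀ t ∈ Set.Icc (0 : ℝ) T,
      deriv (fun s => h (χ s, s) - (1 / μ) * V s) t
        ≥ -α * (h (χ t, t) - (1 / μ) * V t) :=
  barrier_differential_inequality_general T α β lam ε μ hβ hε hμ hparam χ χs h V hχ hh hV hVlb
    hVdecay hISSf
end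

section
/- Let α, β, λ, ε, μ > 0 be real constants with λ ≥ α + εμ/(4β). Let g and e be vectors in a real inner product space, and let h, V be real numbers with V ≥ β‖e‖². Then −α h + (1/ε)‖g‖² − ‖g‖·‖e‖ + (λ/μ) V ≥ −α (h − V/μ). -/
/-- Core algebraic estimate in the proof of Theorem 1: completing the square in
`‖g‖` and `‖e‖` and using the parameter condition `λ ≥ α + εμ/(4β)`. -/
theorem core_barrier_estimate
    {E : Type*} [NormedAddCommGroup E] [InnerProductSpace ℝ E]
    (α β lam ε μ : ℝ)
    (hα : 0 < α) (hβ : 0 < β) (hlam : 0 < lam) (hε : 0 < ε) (hμ : 0 < μ)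
    (hparam : lam ≥ α + ε * μ / (4 * β))
    (g e : E) (h V : ℝ)
    (hV : V ≥ β * ‖e‖ ^ 2) :
    -α * h + (1 / ε) * ‖g‖ ^ 2 - ‖g‖ * ‖e‖ + (lam / μ) * V ≥ -α * (h - V / μ) := by
  set a := ‖g‖ with ha
  set b := ‖e‖ with hb
  have hag : 0 ≤ a := norm_nonneg g
  have hbg : 0 ≤ b := norm_nonneg e
  have key : (lam - α) / μ * V ≥ ε / 4 * b ^ 2 := by
    have h1 : lam - α ≥ ε * μ / (4 * β) := by linarith
    have hVpos : V ≥ β * b ^ 2 := hV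
    have : (lam - α) / μ * V ≥ (ε * μ / (4 * β)) / μ * (β * b ^ 2) := by
      apply mul_le_mul (div_le_div_of_nonneg_right h1 hμ.le) hVpos
        (by positivity)
        (by
          have : (0:ℝ) < ε * μ / (4 * β) := by positivity
          have h2 : 0 ≤ lam - α := by linarith
          positivity)
    calc (lam - α) / μ * V ≥ (ε * μ / (4 * β)) / μ * (β * b ^ 2) := this
      _ = ε / 4 * b ^ 2 := by field_simp
  have sq : (1 / ε) * a ^ 2 - a * b + ε / 4 * b ^ 2 ≥ 0 := by
    have h0 := mul_nonneg (one_div_nonneg.mpr hε.le) (sq_nonneg (a - ε / 2 * b))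
    have hinv : 1 / ε * ε = 1 := by field_simp
    nlinarith [h0, hinv]
  have hd : (lam - α) / μ * V = lam / μ * V - α * (V / μ) := by ring
  linarith [sq, key]
end

section
/- Let α, ε > 0, let g, v, vₛ be vectors in a real inner product space, and let h, p be real numbers (representing h(χ,t) and the partial time derivative ∂ₜh(χ,t), respectively). If ⟨g, vₛ⟩ + p ≥ −α h + (1/ε)‖g‖², then ⟨g, v⟩ + p ≥ −α h − (ε/4)‖v − vₛ‖². -/
open scoped RealInnerProductSpace

/-- Pointwise ISSf lemma: the input-to-state safe constraint on the commanded
velocity `vₛ` guarantees a barrier decrease condition for the true velocity `v`,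
degraded only by `(ε/4)` times the squared tracking error. -/
theorem issf_pointwise
    {E : Type*} [NormedAddCommGroup E] [InnerProductSpace ℝ E]
    (α ε : ℝ) (hα : 0 < α) (hε : 0 < ε)
    (g v vs : E) (h p : ℝ)
    (hconstraint : ⟪g, vs⟫ + p ≥ -α * h + (1 / ε) * ‖g‖ ^ 2) :
    ⟪g, v⟫ + p ≥ -α * h - (ε / 4) * ‖v - vs‖ ^ 2 := by
  have hcs : |⟪g, v - vs⟫| ≤ ‖g‖ * ‖v - vs‖ := abs_real_inner_le_norm g (v - vs)
  have hsplit : ⟪g, v⟫ = ⟪g, vs⟫ + ⟪g, v - vs⟫ := by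
    rw [inner_sub_right]; ring
  have h1 := (abs_le.mp hcs).1
  have key : ‖g‖ * ‖v - vs‖ ≤ (1 / ε) * ‖g‖ ^ 2 + (ε / 4) * ‖v - vs‖ ^ 2 := by
    rw [← sub_nonneg]
    have h2 : 0 ≤ (‖g‖ - (ε / 2) * ‖v - vs‖) ^ 2 := sq_nonneg _
    have h3 : (1 / ε) * ‖g‖ ^ 2 + (ε / 4) * ‖v - vs‖ ^ 2 - ‖g‖ * ‖v - vs‖
        = (1 / ε) * (‖g‖ - (ε / 2) * ‖v - vs‖) ^ 2 := by field_simp; ring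
    rw [h3]
    positivity
  linarith
end

section
/- Let α, ε > 0, δ ≥ 0, T > 0. Let H : [0,T] → ℝ and G : [0,T] → ℝ be functions with H differentiable, and suppose H'(t) ≥ −α H(t) + (1/ε)G(t)² − G(t)·δ for all t ∈ [0,T], where G(t) ≥ 0. Then H(t) ≥ (H(0) + εδ²/(4α))·e^{−α t} − εδ²/(4α) for all t ∈ [0,T]; in particular, if H(0) ≥ 0 then H(t) ≥ −εδ²/(4α) for all t ∈ [0,T]. -/
/-!
Completing the square, `(1/ε) G² - G δ ≥ -ε δ² / 4`, turns the hypothesis into the linear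
differential inequality `H' ≥ -α H - ε δ² / 4`. Applied to `-H`, Grönwall's inequality bounds `H`
from below by the solution of the corresponding linear ODE, which is the claimed bound; its
limit `-ε δ² / (4 α)` is the equilibrium of that ODE.
-/

open Set Real

theorem neg_mul_sq_div_four_le_one_div_mul_sq_sub_mul {ε : ℝ} (hε : 0 < ε) (g δ : ℝ) :
    -(ε * δ ^ 2 / 4) ≤ 1 / ε * g ^ 2 - g * δ := by
  have hsquare : 1 / ε * g ^ 2 - g * δ + ε * δ ^ 2 / 4 = 1 / ε * (g - ε * δ / 2) ^ 2 := by
    field_simp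
    ring
  have : 0 ≤ 1 / ε * (g - ε * δ / 2) ^ 2 := by positivity
  linarith

theorem neg_gronwallBound_neg_of_K_ne_0 {δ K ε : ℝ} (hK : K ≠ 0) (x : ℝ) :
    -gronwallBound (-δ) K ε x = (δ - ε / K) * exp (K * x) + ε / K := by
  rw [gronwallBound_of_K_ne_0 hK]
  ring

theorem neg_gronwallBound_neg_le_of_le_deriv_right {f f' : ℝ → ℝ} {δ K ε a b : ℝ}
    (hf : ContinuousOn f (Icc a b)) (hf' : ∀ x ∈ Ico a b, HasDerivWithinAt f (f' x) (Ici x) x)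
    (ha : δ ≤ f a) (bound : ∀ x ∈ Ico a b, K * f x - ε ≤ f' x) :
    ∀ x ∈ Icc a b, -gronwallBound (-δ) K ε (x - a) ≤ f x := by
  intro x hx
  have := le_gronwallBound_of_liminf_deriv_right_le (f := fun y => -f y) (f' := fun y => -f' y)
    (K := K) (ε := ε) hf.neg (fun y hy _ hr => (hf' y hy).neg.liminf_right_slope_le hr)
    (neg_le_neg ha) (fun y hy => by linarith [bound y hy]) x hx
  linarith

theorem issf_ultimate_bound_general
    (α ε δ T : ℝ) (hα : 0 < α) (hε : 0 < ε)
    (H G : ℝ → ℝ)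
    (hH : ∀ t ∈ Set.Icc (0 : ℝ) T, DifferentiableAt ℝ H t)
    (hineq : ∀ t ∈ Set.Icc (0 : ℝ) T,
      deriv H t ≥ -α * H t + (1 / ε) * (G t) ^ 2 - G t * δ) :
    (∀ t ∈ Set.Icc (0 : ℝ) T,
      H t ≥ (H 0 + ε * δ ^ 2 / (4 * α)) * Real.exp (-α * t) - ε * δ ^ 2 / (4 * α)) ∧
    (H 0 ≥ 0 → ∀ t ∈ Set.Icc (0 : ℝ) T, H t ≥ -(ε * δ ^ 2 / (4 * α))) := by
  have hlinear : ∀ t ∈ Ico 0 T, -α * H t - ε * δ ^ 2 / 4 ≤ deriv H t := fun t ht => by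
    linarith [hineq t (Ico_subset_Icc_self ht),
      neg_mul_sq_div_four_le_one_div_mul_sq_sub_mul hε (G t) δ]
  have hbound : ∀ t ∈ Icc 0 T,
      H t ≥ (H 0 + ε * δ ^ 2 / (4 * α)) * exp (-α * t) - ε * δ ^ 2 / (4 * α) := by
    intro t ht
    have := neg_gronwallBound_neg_le_of_le_deriv_right
      (fun s hs => (hH s hs).continuousAt.continuousWithinAt)
      (fun s hs => (hH s (Ico_subset_Icc_self hs)).hasDerivAt.hasDerivWithinAt)
      le_rfl hlinear t ht
    rwa [neg_gronwallBound_neg_of_K_ne_0 (neg_ne_zero.mpr hα.ne'), sub_zero, div_neg, div_div,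
      sub_neg_eq_add, ← sub_eq_add_neg] at this
  refine ⟨hbound, fun hH0 t ht => ?_⟩
  have : 0 ≤ (H 0 + ε * δ ^ 2 / (4 * α)) * exp (-α * t) := by positivity
  linarith [hbound t ht]

/-- Input-to-state safety bound justifying the robustness term `(1/ε)‖∇h‖²` in
the real-time CBF-QP safety filter: the safety value `H` along the true
trajectory admits an exponentially decaying lower bound with ultimate bound
`−εδ²/(4α)`. -/
theorem issf_ultimate_bound
    (α ε δ T : ℝ) (hα : 0 < α) (hε : 0 < ε) (hδ : 0 ≤ δ) (hT : 0 < T)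
    (H G : ℝ → ℝ)
    (hH : ∀ t ∈ Set.Icc (0 : ℝ) T, DifferentiableAt ℝ H t)
    (hG : ∀ t ∈ Set.Icc (0 : ℝ) T, G t ≥ 0)
    (hineq : ∀ t ∈ Set.Icc (0 : ℝ) T,
      deriv H t ≥ -α * H t + (1 / ε) * (G t) ^ 2 - G t * δ) :
    (∀ t ∈ Set.Icc (0 : ℝ) T,
      H t ≥ (H 0 + ε * δ ^ 2 / (4 * α)) * Real.exp (-α * t) - ε * δ ^ 2 / (4 * α)) ∧
    (H 0 ≥ 0 → ∀ t ∈ Set.Icc (0 : ℝ) T, H t ≥ -(ε * δ ^ 2 / (4 * α))) :=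
  issf_ultimate_bound_general α ε δ T hα hε H G hH hineq
end
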